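/- For a Laurent polynomial f ∈ ℤ[t,t⁻¹], the following are equivalent: (1) f(1) = 0 and f is reciprocal, i.e., f(t) = f(t⁻¹); (2) there exists g ∈ ℤ[t,t⁻¹] with g(1) = 0 such that f(t) = g(t) + g(t⁻¹). -/

import Mathlib

/-!
A reciprocal `f` splits as `f = P(t) + P(t⁻¹) + f₀`, where `P` is the part of positive degree and
`f₀` the constant term. Then `f(1) = 2 P(1) + f₀`, so `f(1) = 0` forces `f₀ = -2 P(1)` and
`g = P - P(1)` satisfies `g(1) = 0` and `g(t) + g(t⁻¹) = f`. Conversely `g ↦ g(t) + g(t⁻¹)` is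
reciprocal and doubles the value at `1`.
-/

open LaurentPolynomial

/-- Evaluation of a Laurent polynomial at `t = 1`, i.e. the sum of its coefficients. -/
def evalOne (f : LaurentPolynomial ℤ) : ℤ := (AddMonoidAlgebra.coeff f).sum fun _ c => c

namespace LaurentPolynomial

noncomputable def positivePart {R : Type*} [Semiring R] (f : R[T;T⁻¹]) : R[T;T⁻¹] :=
  AddMonoidAlgebra.ofCoeff (f.coeff.filter (0 < ·))

@[simp]
lemma coeff_positivePart {R : Type*} [Semiring R] (f : R[T;T⁻¹]) (n : ℤ) :
    (positivePart f).coeff n = if 0 < n then f.coeff n else 0 :=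
  Finsupp.filter_apply ..

lemma eq_positivePart_add_invert_positivePart_add_C {R : Type*} [CommSemiring R]
    {f : R[T;T⁻¹]} (hf : invert f = f) :
    f = positivePart f + invert (positivePart f) + C (f.coeff 0) := by
  have hsymm (n : ℤ) : f.coeff (-n) = f.coeff n := by rw [← invert_apply, hf]
  ext n
  simp only [AddMonoidAlgebra.coeff_add, Finsupp.add_apply, coeff_positivePart, invert_apply,
    C_apply, Left.neg_pos_iff, hsymm]
  rcases lt_trichotomy n 0 with hn | rfl | hn
  · simp [hn, hn.not_gt, hn.ne]
  · simp
  · simp [hn, hn.not_gt, hn.ne']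

end LaurentPolynomial

lemma evalOne_eq_leval (f : ℤ[T;T⁻¹]) : evalOne f = leval ℤ (1 : ℤˣ) f := by
  simp [evalOne, smeval]

lemma evalOne_add (f g : ℤ[T;T⁻¹]) : evalOne (f + g) = evalOne f + evalOne g := by
  simp only [evalOne_eq_leval, map_add]

lemma evalOne_sub (f g : ℤ[T;T⁻¹]) : evalOne (f - g) = evalOne f - evalOne g := by
  simp only [evalOne_eq_leval, map_sub]

lemma evalOne_C (r : ℤ) : evalOne (C r) = r := by
  rw [evalOne_eq_leval, leval_apply, smeval_C, smul_eq_mul, mul_one]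

lemma evalOne_invert (f : ℤ[T;T⁻¹]) : evalOne (invert f) = evalOne f := by
  induction f using LaurentPolynomial.induction_on' with
  | add p q hp hq => rw [map_add, evalOne_add, evalOne_add, hp, hq]
  | C_mul_T n r =>
    simp only [evalOne_eq_leval, leval_apply, map_mul, invert_C, invert_T, smeval_C_mul_T_n,
      one_zpow]

/-- For a Laurent polynomial `f ∈ ℤ[t,t⁻¹]`, one has `f(1) = 0` and `f(t) = f(t⁻¹)`
iff `f(t) = g(t) + g(t⁻¹)` for some `g` with `g(1) = 0`. -/
theorem evalOne_eq_zero_and_reciprocal_iff (f : LaurentPolynomial ℤ) :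
    (evalOne f = 0 ∧ invert f = f) ↔
      ∃ g : LaurentPolynomial ℤ, evalOne g = 0 ∧ f = g + invert g := by
  constructor
  · rintro ⟨hf1, hf⟩
    set P := positivePart f
    have hsplit : f = P + invert P + C (f.coeff 0) :=
      eq_positivePart_add_invert_positivePart_add_C hf
    have hf0 : f.coeff 0 = -2 * evalOne P := by
      have := congrArg evalOne hsplit
      rw [evalOne_add, evalOne_add, evalOne_invert, evalOne_C, hf1] at this
      linarith
    refine ⟨P - C (evalOne P), by rw [evalOne_sub, evalOne_C, sub_self], ?_⟩
    calc f = P + invert P + C (f.coeff 0) := hsplit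
      _ = P - C (evalOne P) + invert (P - C (evalOne P)) := by
        rw [hf0, map_sub, invert_C, map_mul, map_neg, map_ofNat]
        ring
  · rintro ⟨g, hg, rfl⟩
    refine ⟨by rw [evalOne_add, evalOne_invert, hg, add_zero], ?_⟩
    rw [map_add, involutive_invert, add_comm]
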